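/- For any real a ≥ 1/T with T > 1 and 0 < α < 1 (with 2T^(1−α) ≤ T), the absolute value of the integral over t from T^(1−α) to T of cos(a t)·w(t) dt is at most 7/a, where w is the weight function defined by w(t) = 3 − t/T on [T^(1−α), 2T^(1−α)] and w(t) = 1 − t/T on (2T^(1−α), T]. -/

import Mathlib

open intervalIntegral

/-- The weight function `w`. -/
noncomputable def wfun (T α t : ℝ) : ℝ :=
  if t ≤ 2 * T ^ (1 - α) then 3 - t / T else 1 - t / T

theorem stmt_10 (α T a : ℝ) (hα : α ∈ Set.Ioo (0 : ℝ) 1) (hT : 1 < T)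
    (hTα : 2 * T ^ (1 - α) ≤ T) (ha : 1 / T ≤ a) :
    |∫ t in T ^ (1 - α)..T, Real.cos (a * t) * wfun T α t| ≤ 7 / a := by
  obtain ⟨hα0, hα1⟩ := hα
  have hT0 : (0:ℝ) < T := by linarith
  have ha0 : (0:ℝ) < a := lt_of_lt_of_le (by positivity) ha
  have ha0' : a ≠ 0 := ne_of_gt ha0
  have hT0' : T ≠ 0 := ne_of_gt hT0
  set T1 := T ^ (1 - α) with hT1def
  have hT10 : 0 < T1 := Real.rpow_pos_of_pos hT0 _
  have hT12 : T1 ≤ 2 * T1 := by linarith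
  -- antiderivative lemma
  have key : ∀ c x y : ℝ, ∫ t in x..y, Real.cos (a*t) * (c - t/T)
      = ((c - y/T) * Real.sin (a*y)/a - Real.cos (a*y)/(a^2*T))
        - ((c - x/T) * Real.sin (a*x)/a - Real.cos (a*x)/(a^2*T)) := by
    intro c x y
    apply intervalIntegral.integral_eq_sub_of_hasDerivAt
    · intro t _
      have hlin : HasDerivAt (fun t : ℝ => a * t) a t := by
        simpa using (hasDerivAt_id t).const_mul a
      have hsin : HasDerivAt (fun t : ℝ => Real.sin (a*t)) (Real.cos (a*t) * a) t :=
        hlin.sin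
      have hcos : HasDerivAt (fun t : ℝ => Real.cos (a*t)) (-Real.sin (a*t) * a) t :=
        hlin.cos
      have hc : HasDerivAt (fun t : ℝ => c - t/T) (-(1/T)) t := by
        simpa using ((hasDerivAt_id t).div_const T).const_sub c
      have h1 : HasDerivAt (fun t : ℝ => (c - t/T) * Real.sin (a*t)/a)
          ((-(1/T) * Real.sin (a*t) + (c - t/T) * (Real.cos (a*t) * a))/a) t :=
        (hc.mul hsin).div_const a
      have h2 : HasDerivAt (fun t : ℝ => Real.cos (a*t)/(a^2*T))
          ((-Real.sin (a*t) * a)/(a^2*T)) t := hcos.div_const _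
      have := h1.sub h2
      convert this using 1
      · rfl
      field_simp
      ring
    · exact (Continuous.mul (Real.continuous_cos.comp (continuous_const.mul continuous_id))
        (continuous_const.sub (continuous_id.div_const T))).intervalIntegrable x y
  -- integrability of the full integrand on each piece
  have hcont1 : Continuous (fun t : ℝ => Real.cos (a*t) * (3 - t/T)) :=
    Continuous.mul (Real.continuous_cos.comp (continuous_const.mul continuous_id))
      (continuous_const.sub (continuous_id.div_const T))
  have hcont2 : Continuous (fun t : ℝ => Real.cos (a*t) * (1 - t/T)) :=
    Continuous.mul (Real.continuous_cos.comp (continuous_const.mul continuous_id))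
      (continuous_const.sub (continuous_id.div_const T))
  have heq1 : Set.EqOn (fun t => Real.cos (a*t) * wfun T α t)
      (fun t : ℝ => Real.cos (a*t) * (3 - t/T)) (Set.uIcc T1 (2*T1)) := by
    intro t ht
    rw [Set.uIcc_of_le hT12] at ht
    simp only [wfun, ← hT1def, if_pos ht.2]
  have heq2 : ∀ t ∈ Set.Ioc (2*T1) T,
      Real.cos (a*t) * wfun T α t = Real.cos (a*t) * (1 - t/T) := by
    intro t ht
    simp only [wfun, ← hT1def, if_neg (not_le.mpr ht.1)]
  have hi1 : IntervalIntegrable (fun t => Real.cos (a*t) * wfun T α t)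
      MeasureTheory.volume T1 (2*T1) := by
    apply (hcont1.intervalIntegrable T1 (2*T1)).congr
    intro t ht
    exact (heq1 (Set.uIoc_subset_uIcc ht)).symm
  have hi2 : IntervalIntegrable (fun t => Real.cos (a*t) * wfun T α t)
      MeasureTheory.volume (2*T1) T := by
    apply (hcont2.intervalIntegrable (2*T1) T).congr
    intro t ht
    rw [Set.uIoc_of_le hTα] at ht
    exact (heq2 t ht).symm
  have hsplit : (∫ t in T1..T, Real.cos (a*t) * wfun T α t)
      = (∫ t in T1..2*T1, Real.cos (a*t) * wfun T α t)
        + ∫ t in 2*T1..T, Real.cos (a*t) * wfun T α t :=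
    (intervalIntegral.integral_add_adjacent_intervals hi1 hi2).symm
  have hval1 : (∫ t in T1..2*T1, Real.cos (a*t) * wfun T α t)
      = ∫ t in T1..2*T1, Real.cos (a*t) * (3 - t/T) :=
    intervalIntegral.integral_congr heq1
  have hval2 : (∫ t in 2*T1..T, Real.cos (a*t) * wfun T α t)
      = ∫ t in 2*T1..T, Real.cos (a*t) * (1 - t/T) := by
    apply intervalIntegral.integral_congr_ae
    apply MeasureTheory.ae_of_all
    intro t ht
    rw [Set.uIoc_of_le hTα] at ht
    exact heq2 t ht
  rw [hsplit, hval1, hval2, key, key]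
  -- Now bound the explicit expression
  have hS : ((3 - 2*T1/T) * Real.sin (a*(2*T1))/a - Real.cos (a*(2*T1))/(a^2*T))
        - ((3 - T1/T) * Real.sin (a*T1)/a - Real.cos (a*T1)/(a^2*T))
      + (((1 - T/T) * Real.sin (a*T)/a - Real.cos (a*T)/(a^2*T))
        - ((1 - 2*T1/T) * Real.sin (a*(2*T1))/a - Real.cos (a*(2*T1))/(a^2*T)))
      = 2 * Real.sin (a*(2*T1))/a - (3 - T1/T) * Real.sin (a*T1)/a
        + (Real.cos (a*T1) - Real.cos (a*T))/(a^2*T) := by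
    field_simp
    ring
  rw [hS]
  have haT : 1 ≤ a * T := by
    rw [div_le_iff₀ hT0] at ha; linarith [ha]
  have hT1T : T1 / T ≤ 1 := by
    rw [div_le_one hT0]; linarith
  have hT1Tpos : 0 ≤ T1 / T := by positivity
  have hb1 : |2 * Real.sin (a*(2*T1))/a| ≤ 2/a := by
    rw [abs_div, abs_of_pos ha0]
    gcongr
    calc |2 * Real.sin (a*(2*T1))| = 2 * |Real.sin (a*(2*T1))| := by
          rw [abs_mul]; norm_num
      _ ≤ 2 * 1 := by nlinarith [Real.abs_sin_le_one (a*(2*T1))]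
      _ = 2 := by norm_num
  have hb2 : |(3 - T1/T) * Real.sin (a*T1)/a| ≤ 3/a := by
    rw [abs_div, abs_of_pos ha0]
    gcongr
    calc |(3 - T1/T) * Real.sin (a*T1)| = |3 - T1/T| * |Real.sin (a*T1)| := abs_mul _ _
      _ ≤ 3 * 1 := by
          apply mul_le_mul _ (Real.abs_sin_le_one _) (abs_nonneg _) (by norm_num)
          rw [abs_of_nonneg (by linarith)]
          linarith
      _ = 3 := by norm_num
  have hb3 : |(Real.cos (a*T1) - Real.cos (a*T))/(a^2*T)| ≤ 2/a := by
    rw [abs_div, abs_of_pos (by positivity : (0:ℝ) < a^2*T)]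
    have h1 : |Real.cos (a*T1) - Real.cos (a*T)| ≤ 2 := by
      calc |Real.cos (a*T1) - Real.cos (a*T)| ≤ |Real.cos (a*T1)| + |Real.cos (a*T)| :=
            abs_sub _ _
        _ ≤ 1 + 1 := add_le_add (Real.abs_cos_le_one _) (Real.abs_cos_le_one _)
        _ = 2 := by norm_num
    have h2 : a ≤ a^2 * T := by nlinarith
    calc |Real.cos (a*T1) - Real.cos (a*T)|/(a^2*T) ≤ 2/(a^2*T) := by gcongr
      _ ≤ 2/a := div_le_div_of_nonneg_left (by norm_num) ha0 h2
  calc |2 * Real.sin (a*(2*T1))/a - (3 - T1/T) * Real.sin (a*T1)/a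
        + (Real.cos (a*T1) - Real.cos (a*T))/(a^2*T)|
      ≤ |2 * Real.sin (a*(2*T1))/a - (3 - T1/T) * Real.sin (a*T1)/a|
        + |(Real.cos (a*T1) - Real.cos (a*T))/(a^2*T)| := abs_add_le _ _
    _ ≤ (|2 * Real.sin (a*(2*T1))/a| + |(3 - T1/T) * Real.sin (a*T1)/a|)
        + |(Real.cos (a*T1) - Real.cos (a*T))/(a^2*T)| := by
          gcongr
          exact abs_sub _ _
    _ ≤ (2/a + 3/a) + 2/a := add_le_add (add_le_add hb1 hb2) hb3
    _ = 7/a := by ring
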